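/- arXiv:1103.1423 — 2 statements merged into one kernel-verified Lean document; each statement's English description precedes it below -/
import Mathlib

section
/- Let Γ be a finite connected graph (metric graph) with first Betti number β_Γ, let f be a function on Γ which is nonzero on the vertices of Γ and has finitely many isolated zeros, let P = P(f) be its zero set, μ(f) = |P| the number of zeros, ν(f) the number of nodal domains, and β_{Γ\P} the first Betti number of the graph Γ cut at the points of P. Then ν(f) = μ(f) + 1 − (β_Γ − β_{Γ\P}); in particular μ(f) − β_Γ + 1 ≤ ν(f) ≤ μ(f) + 1. -/
/-!
# Quantum graphs, partitions and the energy functional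

This file sets up a formalization of quantum graphs (finite metric graphs equipped with a
Schrödinger operator `f ↦ -f'' + q f` with bounded piecewise continuous potential and
extended δ-type vertex conditions), their eigenvalues (counted with multiplicity),
partitions by interior points, the graphs obtained by cutting at a partition,
the energy functional `Λ`, equipartitions, and the Robin ("section point") cutting
construction underlying the map `Φ_m` of Band–Berkolaiko–Raz–Smilansky.
-/

open scoped Classical ENNReal Real
open Set

noncomputable section

/-- A **quantum graph**: a finite metric graph `(V, E)` together with edge lengths,
a bounded piecewise continuous potential on each edge, and extended δ-type vertex
conditions with coefficients `α v ∈ ℝ ∪ {∞}` (`none` denotes `∞`, i.e. the Dirichlet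
condition).  Each edge `e` is identified with the segment `[0, L e]`, running from
the vertex `s e` to the vertex `t e`. -/
structure QuantumGraph where
  /-- vertices -/
  V : Type
  /-- edges -/
  E : Type
  instV : Fintype V
  instE : Fintype E
  /-- initial vertex of an edge -/
  s : E → V
  /-- terminal vertex of an edge -/
  t : E → V
  /-- edge lengths -/
  L : E → ℝ
  L_pos : ∀ e, 0 < L e
  /-- the potential on each edge -/
  q : E → ℝ → ℝ
  /-- the potential is bounded on each edge -/
  q_bdd : ∀ e, ∃ M : ℝ, ∀ x ∈ Set.Icc (0 : ℝ) (L e), |q e x| ≤ M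
  /-- the potential is piecewise continuous on each edge -/
  q_pc : ∀ e, ∃ S : Finset ℝ, ContinuousOn (q e) (Set.Icc (0 : ℝ) (L e) \ (S : Set ℝ))
  /-- coefficients of the δ-type vertex conditions; `none` means Dirichlet -/
  α : V → Option ℝ

attribute [instance] QuantumGraph.instV QuantumGraph.instE

namespace QuantumGraph

variable (Γ : QuantumGraph)

/-- The "ends" of edges: `(e, false)` is the end of `e` at `s e` (coordinate `0`),
`(e, true)` is the end at `t e` (coordinate `L e`). `endV` gives the vertex of an end. -/
def endV (a : Γ.E × Bool) : Γ.V := if a.2 then Γ.t a.1 else Γ.s a.1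

/-- Value of an edgewise function at an end of an edge. -/
def endVal (f : Γ.E → ℝ → ℝ) (a : Γ.E × Bool) : ℝ :=
  if a.2 then f a.1 (Γ.L a.1) else f a.1 0

/-- Derivative of an edgewise function at an end of an edge, taken *into* the edge. -/
def endDeriv (f' : Γ.E → ℝ → ℝ) (a : Γ.E × Bool) : ℝ :=
  if a.2 then -(f' a.1 (Γ.L a.1)) else f' a.1 0

/-- The sum of the derivatives (into the edges) over all ends meeting a vertex `v`. -/
def derivSumAt (f' : Γ.E → ℝ → ℝ) (v : Γ.V) : ℝ :=
  ∑ a : Γ.E × Bool, if Γ.endV a = v then Γ.endDeriv f' a else 0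

/-- The degree of a vertex: the number of ends of edges meeting it. -/
def degree (v : Γ.V) : ℕ :=
  ∑ a : Γ.E × Bool, if Γ.endV a = v then 1 else 0

/-- `Γ.IsEigenfunPair lam f f'` asserts that `f` (with edgewise derivative `f'`) is an
eigenfunction of the Schrödinger operator `g ↦ -g'' + q g` on `Γ` with eigenvalue `lam`:
on each edge `f` is differentiable with continuous derivative `f'`, the eigenvalue equation
`f'' = (q - lam) f` holds away from the (finitely many) discontinuities of the potential,
`f` is continuous at the vertices, and the extended δ-type vertex conditions hold.
(For definiteness, `f` is normalized to vanish outside the segments `[0, L e]`.) -/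
structure IsEigenfunPair (lam : ℝ) (f f' : Γ.E → ℝ → ℝ) : Prop where
  support : ∀ e x, x ∉ Set.Icc (0 : ℝ) (Γ.L e) → f e x = 0
  hasDeriv : ∀ e, ∀ x ∈ Set.Icc (0 : ℝ) (Γ.L e),
    HasDerivWithinAt (f e) (f' e x) (Set.Icc (0 : ℝ) (Γ.L e)) x
  contDeriv : ∀ e, ContinuousOn (f' e) (Set.Icc (0 : ℝ) (Γ.L e))
  ode : ∀ e, ∃ S : Finset ℝ, ∀ x ∈ Set.Icc (0 : ℝ) (Γ.L e) \ (S : Set ℝ),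
    HasDerivWithinAt (f' e) ((Γ.q e x - lam) * f e x) (Set.Icc (0 : ℝ) (Γ.L e)) x
  contVert : ∀ a b, Γ.endV a = Γ.endV b → Γ.endVal f a = Γ.endVal f b
  delta : ∀ (v : Γ.V) (c : ℝ) (a : Γ.E × Bool), Γ.α v = some c → Γ.endV a = v →
    Γ.derivSumAt f' v = c * Γ.endVal f a
  dirich : ∀ (v : Γ.V) (a : Γ.E × Bool), Γ.α v = none → Γ.endV a = v → Γ.endVal f a = 0
  nontrivial : ∃ e, ∃ x ∈ Set.Icc (0 : ℝ) (Γ.L e), f e x ≠ 0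

/-- `f` is an eigenfunction of `Γ` with eigenvalue `lam`. -/
def IsEigenfun (lam : ℝ) (f : Γ.E → ℝ → ℝ) : Prop := ∃ f', Γ.IsEigenfunPair lam f f'

/-- `lam` is an eigenvalue of (the Schrödinger operator on) `Γ`. -/
def IsEigenvalue (lam : ℝ) : Prop := ∃ f, Γ.IsEigenfun lam f

/-- The multiplicity of `lam` as an eigenvalue of `Γ`: the dimension of the span of the
eigenfunctions with eigenvalue `lam`. -/
def eigMult (lam : ℝ) : ℕ :=
  Cardinal.toNat (Module.rank ℝ
    (Submodule.span ℝ {f : Γ.E → ℝ → ℝ | Γ.IsEigenfun lam f}))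

/-- `lam` is a simple eigenvalue of `Γ`. -/
def IsSimpleEigenvalue (lam : ℝ) : Prop := Γ.IsEigenvalue lam ∧ Γ.eigMult lam = 1

/-- The eigenvalue counting function: the number (with multiplicity) of eigenvalues `≤ μ`. -/
def eigCount (μ : ℝ) : ℝ≥0∞ :=
  ∑' ν : {ν : ℝ // Γ.IsEigenvalue ν ∧ ν ≤ μ}, (Γ.eigMult ν : ℝ≥0∞)

/-- The `n`-th eigenvalue of `Γ` (eigenvalues numbered in ascending order with
multiplicity, starting from `n = 1`):  `λ_n = inf {μ | N(μ) ≥ n}` where `N` is the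
counting function. -/
def evalue (n : ℕ) : ℝ := sInf {μ : ℝ | (n : ℝ≥0∞) ≤ Γ.eigCount μ}

/-- Combinatorial adjacency of vertices. -/
def adj (v w : Γ.V) : Prop :=
  ∃ e, (Γ.s e = v ∧ Γ.t e = w) ∨ (Γ.s e = w ∧ Γ.t e = v)

/-- The setoid on the vertices generated by adjacency. -/
def compSetoid : Setoid Γ.V := Relation.EqvGen.setoid Γ.adj

/-- The connected components of `Γ`. -/
def Components : Type := Quotient Γ.compSetoid

/-- The connected component of a vertex. -/
def compOf (v : Γ.V) : Γ.Components := Quotient.mk Γ.compSetoid v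

/-- The number of connected components of `Γ`. -/
def numComponents : ℕ := Nat.card Γ.Components

/-- The first Betti number `β = |E| - |V| + (number of components)`. -/
def betti : ℤ := (Nat.card Γ.E : ℤ) - (Nat.card Γ.V : ℤ) + (Γ.numComponents : ℤ)

/-- `Γ` is connected (and nonempty). -/
def Connected : Prop := Γ.numComponents = 1

/-- The quantum subgraph given by a connected component of `Γ` (with the conditions
inherited from `Γ`). -/
def comp (c : Γ.Components) : QuantumGraph where
  V := {v : Γ.V // Γ.compOf v = c}
  E := {e : Γ.E // Γ.compOf (Γ.s e) = c}
  instV := Fintype.ofFinite _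
  instE := Fintype.ofFinite _
  s e := ⟨Γ.s e.1, e.2⟩
  t e := ⟨Γ.t e.1, by
    have h : Γ.compOf (Γ.s e.1) = Γ.compOf (Γ.t e.1) :=
      Quotient.sound (Relation.EqvGen.rel _ _ ⟨e.1, Or.inl ⟨rfl, rfl⟩⟩)
    rw [← h]; exact e.2⟩
  L e := Γ.L e.1
  L_pos e := Γ.L_pos e.1
  q e := Γ.q e.1
  q_bdd e := Γ.q_bdd e.1
  q_pc e := Γ.q_pc e.1
  α v := Γ.α v.1

/-- `f` does not vanish at any vertex of `Γ` which does not carry the Dirichlet condition. -/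
def NonvanishingAtVertices (f : Γ.E → ℝ → ℝ) : Prop :=
  ∀ a : Γ.E × Bool, Γ.α (Γ.endV a) ≠ none → Γ.endVal f a ≠ 0

/-- A **(proper) partition** of a quantum graph `Γ`: a finite set of *partition vertices*
in the interiors of the edges, recorded, for each edge `e`, as a strictly increasing
list of `num e` points of the open interval `(0, L e)`. -/
structure Partition (Γ : QuantumGraph) where
  /-- the number of partition points on each edge -/
  num : Γ.E → ℕ
  /-- the partition points on each edge, in increasing order -/
  pts : ∀ e, Fin (num e) → ℝ
  mono : ∀ e, StrictMono (pts e)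
  lower : ∀ e i, 0 < pts e i
  upper : ∀ e i, pts e i < Γ.L e

namespace Partition

variable {Γ : QuantumGraph} (P : Partition Γ)

/-- The size (total number of partition points) of a partition. -/
def size : ℕ := ∑ e, P.num e

/-- The index type of the partition points of `P`. -/
abbrev ι : Type := (e : Γ.E) × Fin (P.num e)

/-- The subdivision boundaries on an edge `e`: `bnd e 0 = 0`,
`bnd e j = pts e (j-1)` for `1 ≤ j ≤ num e`, and `bnd e j = L e` for `j > num e`. -/
def bnd (e : Γ.E) (j : ℕ) : ℝ :=
  if h0 : j = 0 then 0
  else if h : j ≤ P.num e then P.pts e ⟨j - 1, by omega⟩ else Γ.L e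

lemma bnd_nonneg (e : Γ.E) (j : ℕ) : 0 ≤ P.bnd e j := by
  unfold bnd
  split_ifs with h0 h
  · exact le_rfl
  · exact (P.lower e _).le
  · exact (Γ.L_pos e).le

lemma bnd_le (e : Γ.E) (j : ℕ) : P.bnd e j ≤ Γ.L e := by
  unfold bnd
  split_ifs with h0 h
  · exact (Γ.L_pos e).le
  · exact (P.upper e _).le
  · exact le_rfl

lemma bnd_lt_succ (e : Γ.E) {j : ℕ} (hj : j ≤ P.num e) : P.bnd e j < P.bnd e (j + 1) := by
  unfold bnd
  have hj1 : ¬(j + 1 = 0) := by omega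
  rw [dif_neg hj1]
  by_cases h0 : j = 0
  · subst h0
    rw [dif_pos rfl]
    by_cases h1 : 0 + 1 ≤ P.num e
    · rw [dif_pos h1]; exact P.lower e _
    · rw [dif_neg h1]; exact Γ.L_pos e
  · rw [dif_neg h0, dif_pos hj]
    by_cases h2 : j + 1 ≤ P.num e
    · rw [dif_pos h2]
      exact P.mono e (by simp only [Fin.mk_lt_mk]; omega)
    · rw [dif_neg h2]; exact P.upper e _

/-- The quantum graph obtained by **cutting** `Γ` at the partition points of `P`.
Each partition point `p` is replaced by a pair of new vertices: `(p, false)` (denoted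
`v_p^-`, attached to the piece of the edge to the left of `p`) and `(p, true)`
(denoted `v_p^+`, attached to the piece to the right), carrying the δ-type coefficients
`am p`, resp. `ap p`. -/
def cut (am ap : P.ι → Option ℝ) : QuantumGraph where
  V := Γ.V ⊕ P.ι × Bool
  E := (e : Γ.E) × Fin (P.num e + 1)
  instV := inferInstance
  instE := inferInstance
  s := fun x => if h : x.2.val = 0 then Sum.inl (Γ.s x.1)
    else Sum.inr (⟨x.1, ⟨x.2.val - 1, by have := x.2.isLt; omega⟩⟩, true)
  t := fun x => if h : x.2.val = P.num x.1 then Sum.inl (Γ.t x.1)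
    else Sum.inr (⟨x.1, ⟨x.2.val, by have := x.2.isLt; omega⟩⟩, false)
  L := fun x => P.bnd x.1 (x.2.val + 1) - P.bnd x.1 x.2.val
  L_pos := fun x => by
    have h := P.bnd_lt_succ x.1 (j := x.2.val) (by have := x.2.isLt; omega)
    exact sub_pos.mpr h
  q := fun x y => Γ.q x.1 (P.bnd x.1 x.2.val + y)
  q_bdd := fun x => by
    obtain ⟨M, hM⟩ := Γ.q_bdd x.1
    refine ⟨M, fun y hy => ?_⟩
    have hy1 : (0 : ℝ) ≤ y := hy.1
    have hy2 : y ≤ P.bnd x.1 (x.2.val + 1) - P.bnd x.1 x.2.val := hy.2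
    have hb0 := P.bnd_nonneg x.1 x.2.val
    have hbL := P.bnd_le x.1 (x.2.val + 1)
    exact hM _ ⟨by linarith, by linarith⟩
  q_pc := fun x => by
    obtain ⟨S, hS⟩ := Γ.q_pc x.1
    refine ⟨S.image (fun z => z - P.bnd x.1 x.2.val), ?_⟩
    have hc : Continuous (fun y : ℝ => P.bnd x.1 x.2.val + y) := by continuity
    refine ContinuousOn.comp hS hc.continuousOn ?_
    intro y hy
    have hy1 : (0 : ℝ) ≤ y := hy.1.1
    have hy2 : y ≤ P.bnd x.1 (x.2.val + 1) - P.bnd x.1 x.2.val := hy.1.2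
    have hb0 := P.bnd_nonneg x.1 x.2.val
    have hbL := P.bnd_le x.1 (x.2.val + 1)
    refine ⟨⟨by linarith, by linarith⟩, ?_⟩
    intro hmem
    apply hy.2
    simp only [Finset.coe_image, Set.mem_image, Finset.mem_coe]
    exact ⟨_, Finset.mem_coe.mp hmem, by ring⟩
  α := fun v => match v with
    | Sum.inl w => Γ.α w
    | Sum.inr (p, b) => if b then ap p else am p

/-- Cutting `Γ` at `P` with Dirichlet conditions at all new vertices: the graph `Γ \ P`. -/
def cutD : QuantumGraph := P.cut (fun _ => none) (fun _ => none)

/-- The **energy functional** `Λ(P) = max_j λ_1(Γ_j)`, the maximum of the groundstate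
energies of the subgraphs (connected components) of the partition. -/
def energy : ℝ := ⨆ c : P.cutD.Components, (P.cutD.comp c).evalue 1

/-- `P` is an **equipartition**: all its subgraphs share the same groundstate energy. -/
def IsEquipartition : Prop :=
  ∀ c c' : P.cutD.Components, (P.cutD.comp c).evalue 1 = (P.cutD.comp c').evalue 1

/-- The number of subgraphs (connected components) of the partition `P`; for the
partition given by the zero set of a function this is its number of nodal domains. -/
def nodalCount : ℕ := P.cutD.numComponents

/-- `P` is **bipartite**: its subgraphs can be labeled with signs so that the two
subgraphs meeting at any partition point carry different signs. -/
def IsBipartite : Prop :=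
  ∃ g : P.cutD.Components → Bool,
    ∀ p : P.ι, g (P.cutD.compOf (Sum.inr (p, false))) ≠ g (P.cutD.compOf (Sum.inr (p, true)))

/-- The δ-type (Robin) coefficient `tan (θ/2)`, with the Dirichlet condition when
`cos (θ/2) = 0`. -/
def robinAlpha (θ : ℝ) : Option ℝ :=
  if Real.cos (θ / 2) = 0 then none else some (Real.tan (θ / 2))

/-- Cutting `Γ` at the *section points* of `S` with the Robin conditions
`cos (φ_i/2) f'(v_i^-) = - sin (φ_i/2) f(v_i^-)`, `cos (φ_i/2) f'(v_i^+) = sin (φ_i/2) f(v_i^+)`,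
i.e. δ-type coefficients `α(v_i^-) = -tan (φ_i/2)`, `α(v_i^+) = tan (φ_i/2)`:
the graph `Γ_{φ_1, …, φ_β}`. -/
def cutRobin (φ : P.ι → ℝ) : QuantumGraph :=
  P.cut (fun p => (robinAlpha (φ p)).map (fun a => -a)) (fun p => robinAlpha (φ p))

/-- `S` is a valid set of *section points*: cutting `Γ` at `S` leaves a connected graph
with no cycles (a tree). -/
def IsSection : Prop := P.cutD.numComponents = 1 ∧ P.cutD.betti = 0

end Partition

/-- The partition `P` **corresponds** to the function `f` on `Γ`: `f` vanishes exactly at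
the partition points of `P` (in particular `f` is nonzero at the vertices of `Γ`). -/
def Corresponds (f : Γ.E → ℝ → ℝ) (P : Partition Γ) : Prop :=
  ∀ e x, x ∈ Set.Icc (0 : ℝ) (Γ.L e) → (f e x = 0 ↔ ∃ i, P.pts e i = x)

/-- The defining relation of the map `Φ_m`: `Q = Φ_m(φ)` iff the `(m+1)`-st eigenvalue of
the cut graph `Γ_φ` has an eigenfunction `f` which is nonzero at all non-Dirichlet
vertices of `Γ_φ`, and the partition points of `Q`, viewed on `Γ`, are exactly the zeros
of `f` (in the interiors of the edges of `Γ_φ`). -/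
def PhiRel {Γ : QuantumGraph} (S : Partition Γ) (m : ℕ) (φ : S.ι → ℝ) (Q : Partition Γ) :
    Prop :=
  ∃ f, (S.cutRobin φ).IsEigenfun ((S.cutRobin φ).evalue (m + 1)) f ∧
    (S.cutRobin φ).NonvanishingAtVertices f ∧
    ∀ (e : Γ.E) (y : ℝ), 0 < y → y < Γ.L e →
      ((∃ j, Q.pts e j = y) ↔ ∃ (i : Fin (S.num e + 1)) (x : ℝ),
        0 < x ∧ x < (S.cutRobin φ).L ⟨e, i⟩ ∧ S.bnd e i + x = y ∧ f ⟨e, i⟩ x = 0)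

/-- A single edge `e` of `Γ`, as a quantum graph with Dirichlet conditions at both
endpoints. -/
def edgeGraph (e : Γ.E) : QuantumGraph where
  V := Bool
  E := Unit
  instV := inferInstance
  instE := inferInstance
  s _ := false
  t _ := true
  L _ := Γ.L e
  L_pos _ := Γ.L_pos e
  q _ := Γ.q e
  q_bdd _ := Γ.q_bdd e
  q_pc _ := Γ.q_pc e
  α _ := none

/-- `λ_D = max_e λ_e`, the maximum over the edges of `Γ` of the groundstate energy of the
edge with Dirichlet conditions at both endpoints. -/
def dirichletMax : ℝ := ⨆ e : Γ.E, (Γ.edgeGraph e).evalue 1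

/-- The fundamental domain `(-π, π]^ι` of the torus `𝕋^ι`. -/
def fundamental (ι : Type) : Set (ι → ℝ) := {φ | ∀ j, φ j ∈ Set.Ioc (-π) π}

/-- A set of parameter vectors is `2π`-periodic in every coordinate (i.e. it descends to
the torus `𝕋^ι`). -/
def PeriodicSet {ι : Type} (D : Set (ι → ℝ)) : Prop :=
  ∀ φ ∈ D, ∀ j, Function.update φ j (φ j + 2 * π) ∈ D ∧
    Function.update φ j (φ j - 2 * π) ∈ D

/-- A map of parameter vectors is `2π`-periodic in every coordinate (i.e. it descends to
the torus `𝕋^ι`). -/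
def PeriodicMap {ι α : Type} (Φ : (ι → ℝ) → α) : Prop :=
  ∀ (φ : ι → ℝ) (j : ι), Φ (Function.update φ j (φ j + 2 * π)) = Φ φ

end QuantumGraph

open QuantumGraph

/-! Cutting at the `μ` zeros adds `μ` edges and `2μ` vertices, so for connected `Γ` the Betti
numbers differ by `μ + 1 - ν`: the identity is pure counting. For the bounds, `β_{Γ\P} ≥ 0`
because each edge merges at most two components, and `ν ≤ μ + 1` because regluing the `μ` pairs
of cut points, each of which merges at most two nodal domains, gives back the connected `Γ`. -/

theorem card_quotient_eqvGen_le_add_one {X : Type*} [Finite X] {r r' : X → X → Prop} {a b : X}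
    (h : ∀ x y, r' x y → r x y ∨ x = a ∧ y = b) :
    Nat.card (Quotient (Relation.EqvGen.setoid r)) ≤
      Nat.card (Quotient (Relation.EqvGen.setoid r')) + 1 := by
  classical
  let q := Quotient.mk (Relation.EqvGen.setoid r)
  -- Send the class of `b` to the class of `a`; this respects `r'` and hits every other class.
  let merge : X → Quotient (Relation.EqvGen.setoid r) := fun x => if q x = q b then q a else q x
  let ψ : Quotient (Relation.EqvGen.setoid r') → Quotient (Relation.EqvGen.setoid r) :=
    Quotient.lift merge fun x y hxy => by
      refine Setoid.eqvGen_le (s := Setoid.ker merge) (fun x y hxy => ?_) hxy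
      rcases h x y hxy with hr | ⟨rfl, rfl⟩
      · have hq : q x = q y := Quotient.sound (Relation.EqvGen.rel _ _ hr)
        simp only [Setoid.ker_def, merge, hq]
      · simp [Setoid.ker_def, merge]
  have hsurj : Function.Surjective fun o : Option _ => o.elim (q b) ψ := by
    rintro ⟨x⟩
    by_cases hx : q x = q b
    · exact ⟨none, hx.symm⟩
    · exact ⟨some (Quotient.mk _ x), if_neg hx⟩
  calc _ ≤ Nat.card (Option (Quotient (Relation.EqvGen.setoid r'))) :=
        Nat.card_le_card_of_surjective _ hsurj
    _ = _ := Finite.card_option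

theorem card_le_card_quotient_eqvGen_add_card {X J : Type*} [Finite X] [Fintype J]
    (p : J → X × X) :
    Nat.card X ≤
      Nat.card (Quotient (Relation.EqvGen.setoid fun x y => ∃ j, p j = (x, y))) +
        Fintype.card J := by
  classical
  suffices ∀ T : Finset J, Nat.card X ≤
      Nat.card (Quotient (Relation.EqvGen.setoid fun x y => ∃ j ∈ T, p j = (x, y))) + T.card by
    simpa using this Finset.univ
  intro T
  induction T using Finset.induction_on with
  | empty =>
    have hinj : Function.Injective (Quotient.mk (Relation.EqvGen.setoid
        fun x y => ∃ j ∈ (∅ : Finset J), p j = (x, y))) := fun x y hxy =>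
      Setoid.eqvGen_le (s := ⊥) (by simp) (Quotient.exact hxy)
    exact (Nat.card_le_card_of_injective _ hinj).trans (Nat.le_add_right _ _)
  | insert j T hj ih =>
    have hstep := card_quotient_eqvGen_le_add_one (X := X)
      (r := fun x y => ∃ j ∈ T, p j = (x, y))
      (r' := fun x y => ∃ j' ∈ insert j T, p j' = (x, y)) (a := (p j).1) (b := (p j).2) <| by
        rintro x y ⟨j', hj', hp⟩
        rcases Finset.mem_insert.mp hj' with rfl | hj'
        · simp [hp]
        · exact Or.inl ⟨j', hj', hp⟩
    rw [Finset.card_insert_of_notMem hj]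
    omega

namespace QuantumGraph

variable (Γ : QuantumGraph)

instance : Finite Γ.Components := Quotient.finite _

theorem compSetoid_eq_eqvGen_edges :
    Γ.compSetoid = Relation.EqvGen.setoid fun v w => ∃ e, (Γ.s e, Γ.t e) = (v, w) := by
  refine le_antisymm (Setoid.eqvGen_le ?_) (Setoid.eqvGen_le ?_)
  · rintro v w ⟨e, ⟨rfl, rfl⟩ | ⟨rfl, rfl⟩⟩
    · exact Relation.EqvGen.rel _ _ ⟨e, rfl⟩
    · exact Relation.EqvGen.symm _ _ (Relation.EqvGen.rel _ _ ⟨e, rfl⟩)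
  · rintro v w ⟨e, he⟩
    obtain ⟨rfl, rfl⟩ := Prod.mk.inj he
    exact Relation.EqvGen.rel _ _ ⟨e, Or.inl ⟨rfl, rfl⟩⟩

theorem betti_nonneg : 0 ≤ Γ.betti := by
  have h := card_le_card_quotient_eqvGen_add_card fun e => (Γ.s e, Γ.t e)
  rw [← compSetoid_eq_eqvGen_edges, ← Nat.card_eq_fintype_card] at h
  change Nat.card Γ.V ≤ Γ.numComponents + Nat.card Γ.E at h
  unfold betti
  omega

theorem Connected.apply_eq_apply {Γ : QuantumGraph} (hΓ : Γ.Connected) {α : Type*}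
    {g : Γ.V → α} (hg : ∀ e, g (Γ.s e) = g (Γ.t e)) (v w : Γ.V) : g v = g w := by
  have hvw : Γ.compOf v = Γ.compOf w := (Nat.card_eq_one_iff_unique.mp hΓ).1.elim _ _
  refine Setoid.eqvGen_le (s := Setoid.ker g) ?_ (Quotient.exact hvw)
  rintro v w ⟨e, ⟨rfl, rfl⟩ | ⟨rfl, rfl⟩⟩
  exacts [hg e, (hg e).symm]

namespace Partition

variable {Γ} (P : Partition Γ) (am ap : P.ι → Option ℝ)

theorem card_ι : Fintype.card P.ι = P.size := by
  simp [size]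

theorem card_cut_V : Nat.card (P.cut am ap).V = Nat.card Γ.V + 2 * P.size := by
  change Nat.card (Γ.V ⊕ P.ι × Bool) = _
  simp [Nat.card_eq_fintype_card, size]
  ring

theorem card_cut_E : Nat.card (P.cut am ap).E = Nat.card Γ.E + P.size := by
  change Nat.card ((e : Γ.E) × Fin (P.num e + 1)) = _
  simp [Nat.card_eq_fintype_card, size, Finset.sum_add_distrib, add_comm]

theorem cut_s_zero (e : Γ.E) : (P.cut am ap).s ⟨e, 0⟩ = Sum.inl (Γ.s e) := by
  simp [cut]

theorem cut_s_succ (e : Γ.E) (i : Fin (P.num e)) :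
    (P.cut am ap).s ⟨e, i.succ⟩ = Sum.inr (⟨e, i⟩, true) := by
  simp [cut]

theorem cut_t_last (e : Γ.E) : (P.cut am ap).t ⟨e, Fin.last _⟩ = Sum.inl (Γ.t e) := by
  simp [cut]

theorem cut_t_castSucc (e : Γ.E) (i : Fin (P.num e)) :
    (P.cut am ap).t ⟨e, i.castSucc⟩ = Sum.inr (⟨e, i⟩, false) := by
  simp [cut, i.isLt.ne]

section Glue

variable {P am ap} {α : Type*} {F : (P.cut am ap).V → α}

theorem apply_cut_t_eq (hedge : ∀ x, F ((P.cut am ap).s x) = F ((P.cut am ap).t x))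
    (hglue : ∀ p, F (Sum.inr (p, false)) = F (Sum.inr (p, true))) (e : Γ.E)
    (j : Fin (P.num e + 1)) :
    F ((P.cut am ap).t ⟨e, j⟩) = F (Sum.inl (Γ.s e)) := by
  induction j using Fin.induction with
  | zero => rw [← hedge ⟨e, 0⟩, cut_s_zero]
  | succ i ih => rw [← hedge ⟨e, i.succ⟩, cut_s_succ, ← hglue, ← cut_t_castSucc, ih]

theorem apply_eq_apply_of_connected
    (hedge : ∀ x, F ((P.cut am ap).s x) = F ((P.cut am ap).t x))
    (hglue : ∀ p, F (Sum.inr (p, false)) = F (Sum.inr (p, true))) (hconn : Γ.Connected)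
    (v w : (P.cut am ap).V) : F v = F w := by
  have hΓ : ∀ u u' : Γ.V, F (Sum.inl u) = F (Sum.inl u') :=
    hconn.apply_eq_apply fun e => by
      rw [← apply_cut_t_eq hedge hglue e (Fin.last _), cut_t_last]
  have hbase : ∀ v, ∃ u, F v = F (Sum.inl u) := by
    rintro (u | ⟨⟨e, i⟩, _ | _⟩)
    · exact ⟨u, rfl⟩
    · exact ⟨Γ.s e, by rw [← cut_t_castSucc, apply_cut_t_eq hedge hglue]⟩
    · exact ⟨Γ.s e, by rw [← hglue, ← cut_t_castSucc, apply_cut_t_eq hedge hglue]⟩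
  obtain ⟨u, hu⟩ := hbase v
  obtain ⟨u', hu'⟩ := hbase w
  rw [hu, hu', hΓ]

end Glue

theorem nodalCount_le_size_add_one (hconn : Γ.Connected) : P.nodalCount ≤ P.size + 1 := by
  let glue (p : P.ι) : P.cutD.Components × P.cutD.Components :=
    (P.cutD.compOf (Sum.inr (p, false)), P.cutD.compOf (Sum.inr (p, true)))
  have hcard := card_le_card_quotient_eqvGen_add_card glue
  have hreglued :
      Nat.card (Quotient (Relation.EqvGen.setoid fun x y => ∃ p, glue p = (x, y))) ≤ 1 := by
    refine Finite.card_le_one_iff_subsingleton.mpr ⟨?_⟩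
    rintro ⟨⟨v⟩⟩ ⟨⟨w⟩⟩
    exact apply_eq_apply_of_connected (F := fun v => Quotient.mk _ (P.cutD.compOf v))
      (fun x => congrArg _ <|
        Quotient.sound (Relation.EqvGen.rel _ _ ⟨x, Or.inl ⟨rfl, rfl⟩⟩))
      (fun p => Quotient.sound (Relation.EqvGen.rel _ _ ⟨p, rfl⟩)) hconn v w
  rw [card_ι] at hcard
  change Nat.card P.cutD.Components ≤ _
  omega

theorem betti_sub_betti_cutD :
    Γ.betti - P.cutD.betti = Γ.numComponents + P.size - P.nodalCount := by
  unfold betti nodalCount cutD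
  rw [card_cut_V, card_cut_E]
  push_cast
  ring

end Partition

end QuantumGraph

theorem nodal_count_formula_general (Γ : QuantumGraph) (hconn : Γ.Connected)
    (P : Partition Γ) :
    (P.nodalCount : ℤ) = (P.size : ℤ) + 1 - (Γ.betti - P.cutD.betti) ∧
    (P.size : ℤ) - Γ.betti + 1 ≤ (P.nodalCount : ℤ) ∧
    (P.nodalCount : ℤ) ≤ (P.size : ℤ) + 1 := by
  have hformula := P.betti_sub_betti_cutD
  have hcut := P.cutD.betti_nonneg
  have hupper := P.nodalCount_le_size_add_one hconn
  rw [show Γ.numComponents = 1 from hconn, Nat.cast_one] at hformula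
  refine ⟨by omega, by omega, by omega⟩

/-- equations (7)–(8) of the paper.  Let `Γ` be a finite connected
metric graph with first Betti number `β_Γ`, let `f` be a function on `Γ` which is
nonzero on the vertices of `Γ` and has finitely many isolated zeros, all in the
interiors of edges, recorded by the partition `P = P(f)` (hypothesis `hP`); let
`μ(f) = |P|` be the number of zeros, `ν(f)` the number of nodal domains, and
`β_{Γ\P}` the first Betti number of `Γ` cut at the points of `P`.  Then
`ν(f) = μ(f) + 1 - (β_Γ - β_{Γ\P})`; in particular
`μ(f) - β_Γ + 1 ≤ ν(f) ≤ μ(f) + 1`. -/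
theorem nodal_count_formula (Γ : QuantumGraph) (hconn : Γ.Connected)
    (f : Γ.E → ℝ → ℝ) (P : Partition Γ) (hP : Γ.Corresponds f P) :
    (P.nodalCount : ℤ) = (P.size : ℤ) + 1 - (Γ.betti - P.cutD.betti) ∧
    (P.size : ℤ) - Γ.betti + 1 ≤ (P.nodalCount : ℤ) ∧
    (P.nodalCount : ℤ) ≤ (P.size : ℤ) + 1 :=
  nodal_count_formula_general Γ hconn P
end
end

section
/- Let T be a quantum tree graph with δ-type conditions at its vertices, with Dirichlet conditions not allowed at internal vertices. If an eigenvalue λ of T has an eigenfunction that is nonzero at all internal vertices of T, then λ is a simple eigenvalue. -/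
/-!
# Quantum graphs, partitions and the energy functional

This file sets up a formalization of quantum graphs (finite metric graphs equipped with a
Schrödinger operator `f ↦ -f'' + q f` with bounded piecewise continuous potential and
extended δ-type vertex conditions), their eigenvalues (counted with multiplicity),
partitions by interior points, the graphs obtained by cutting at a partition,
the energy functional `Λ`, equipartitions, and the Robin ("section point") cutting
construction underlying the map `Φ_m` of Band–Berkolaiko–Raz–Smilansky.
-/

open scoped Classical ENNReal Real
open Set

noncomputable section

open QuantumGraph

/-!
Let `g` be a second eigenfunction for `lam`. On each edge the Wronskian `f g' - f' g` is
constant, and the vertex conditions make its signed sum over the ends at any vertex vanish,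
so its edge values form a divergence-free flow. The incidence matrix of a tree is injective,
hence the Wronskian vanishes identically. Every edge contains a point where `f ≠ 0` (an
internal endpoint, unless the tree is a single edge), so uniqueness for the ODE
`h'' = (q - lam) h` gives `g = c_e f` on each edge `e`. Since `f ≠ 0` at internal vertices,
continuity forces the constants of edges sharing a vertex to agree, and by connectedness
they are all equal.
-/

theorem monotoneOn_Icc_of_hasDerivAt_nonneg_off_finset {f f' : ℝ → ℝ} (S : Finset ℝ) :
    ∀ {a b : ℝ}, ContinuousOn f (Icc a b) → (∀ x ∈ Ioo a b \ S, HasDerivAt f (f' x) x) →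
      (∀ x ∈ Ioo a b \ S, 0 ≤ f' x) → MonotoneOn f (Icc a b) := by
  induction S using Finset.induction_on with
  | empty =>
    intro a b hf hf' hf'₀
    simp only [Finset.coe_empty, sdiff_empty] at hf' hf'₀
    refine monotoneOn_of_hasDerivWithinAt_nonneg (f' := f') (convex_Icc a b) hf ?_ ?_ <;>
      rw [interior_Icc]
    · exact fun x hx => (hf' x hx).hasDerivWithinAt
    · exact hf'₀
  | insert p S _ ih =>
    intro a b hf hf' hf'₀
    have restrict {c d : ℝ} (hcd : Ioo c d ⊆ Ioo a b) (hp : p ∉ Ioo c d) :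
        Ioo c d \ S ⊆ Ioo a b \ ↑(insert p S) := fun x ⟨hx, hxS⟩ =>
      ⟨hcd hx, by simpa [Finset.coe_insert] using ⟨fun h => hp (h ▸ hx), hxS⟩⟩
    by_cases hp : p ∈ Ioo a b
    · rw [← Icc_union_Icc_eq_Icc hp.1.le hp.2.le]
      have hl : Ioo a p ⊆ Ioo a b := Ioo_subset_Ioo_right hp.2.le
      have hr : Ioo p b ⊆ Ioo a b := Ioo_subset_Ioo_left hp.1.le
      exact (ih (hf.mono (Icc_subset_Icc_right hp.2.le))
          (fun x hx => hf' x (restrict hl (by simp) hx))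
          (fun x hx => hf'₀ x (restrict hl (by simp) hx))).union_right
        (ih (hf.mono (Icc_subset_Icc_left hp.1.le))
          (fun x hx => hf' x (restrict hr (by simp) hx))
          (fun x hx => hf'₀ x (restrict hr (by simp) hx)))
        (isGreatest_Icc hp.1.le) (isLeast_Icc hp.2.le)
    · exact ih hf (fun x hx => hf' x (restrict subset_rfl hp hx))
        (fun x hx => hf'₀ x (restrict subset_rfl hp hx))

theorem antitoneOn_Icc_of_hasDerivAt_nonpos_off_finset {f f' : ℝ → ℝ} (S : Finset ℝ)
    {a b : ℝ} (hf : ContinuousOn f (Icc a b)) (hf' : ∀ x ∈ Ioo a b \ S, HasDerivAt f (f' x) x)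
    (hf'₀ : ∀ x ∈ Ioo a b \ S, f' x ≤ 0) : AntitoneOn f (Icc a b) := fun _ hx _ hy hxy =>
  neg_le_neg_iff.1 <| monotoneOn_Icc_of_hasDerivAt_nonneg_off_finset (f' := -f') S hf.neg
    (fun x hx => (hf' x hx).neg) (fun x hx => neg_nonneg.2 (hf'₀ x hx)) hx hy hxy

theorem eqOn_of_hasDerivAt_zero_off_finset {f : ℝ → ℝ} (S : Finset ℝ) {a b : ℝ}
    (hf : ContinuousOn f (Icc a b)) (hf' : ∀ x ∈ Ioo a b \ S, HasDerivAt f 0 x)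
    {x y : ℝ} (hx : x ∈ Icc a b) (hy : y ∈ Icc a b) : f x = f y := by
  have mono := monotoneOn_Icc_of_hasDerivAt_nonneg_off_finset S hf hf' (fun _ _ => le_rfl)
  have anti := antitoneOn_Icc_of_hasDerivAt_nonpos_off_finset S hf hf' (fun _ _ => le_rfl)
  rcases le_total x y with hxy | hxy
  · exact le_antisymm (mono hx hy hxy) (anti hx hy hxy)
  · exact le_antisymm (anti hy hx hxy) (mono hy hx hxy)

theorem hasDerivAt_mul_exp_mul {r : ℝ → ℝ} {r' x : ℝ} (hr : HasDerivAt r r' x) (c : ℝ) :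
    HasDerivAt (fun y => r y * Real.exp (c * y)) ((r' + c * r x) * Real.exp (c * x)) x :=
  (hr.mul ((hasDerivAt_id' x).const_mul c).exp).congr_deriv (by ring)

theorem nonpos_of_abs_deriv_le_mul {r r' : ℝ → ℝ} (S : Finset ℝ) {a b K : ℝ}
    (hr : ContinuousOn r (Icc a b)) (hr' : ∀ x ∈ Ioo a b \ S, HasDerivAt r (r' x) x)
    (hbound : ∀ x ∈ Ioo a b \ S, |r' x| ≤ K * r x) {x₀ : ℝ} (hx₀ : x₀ ∈ Icc a b)
    (hr₀ : r x₀ = 0) : ∀ x ∈ Icc a b, r x ≤ 0 := by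
  intro x hx
  have hcont (c : ℝ) : ContinuousOn (fun y => r y * Real.exp (c * y)) (Icc a b) :=
    hr.mul (by fun_prop)
  rcases le_total x₀ x with hle | hle
  · have anti := antitoneOn_Icc_of_hasDerivAt_nonpos_off_finset S (hcont (-K))
      (fun y hy => hasDerivAt_mul_exp_mul (hr' y hy) (-K)) fun y hy =>
        mul_nonpos_of_nonpos_of_nonneg (by linarith [(abs_le.1 (hbound y hy)).2])
          (Real.exp_pos _).le
    have := anti hx₀ hx hle
    simp only [hr₀, zero_mul] at this
    exact nonpos_of_mul_nonpos_left this (Real.exp_pos _)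
  · have mono := monotoneOn_Icc_of_hasDerivAt_nonneg_off_finset S (hcont K)
      (fun y hy => hasDerivAt_mul_exp_mul (hr' y hy) K) fun y hy =>
        mul_nonneg (by linarith [(abs_le.1 (hbound y hy)).1]) (Real.exp_pos _).le
    have := mono hx hx₀ hle
    simp only [hr₀, zero_mul] at this
    exact nonpos_of_mul_nonpos_left this (Real.exp_pos _)

structure SolvesLinearODEOn (Q : ℝ → ℝ) (a b : ℝ) (h h' : ℝ → ℝ) : Prop where
  continuousOn : ContinuousOn h (Icc a b)
  continuousOn_deriv : ContinuousOn h' (Icc a b)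
  hasDerivAt_off_finset : ∃ S : Finset ℝ, ∀ x ∈ Ioo a b \ S,
    HasDerivAt h (h' x) x ∧ HasDerivAt h' (Q x * h x) x

namespace SolvesLinearODEOn

variable {Q : ℝ → ℝ} {a b : ℝ} {u u' v v' : ℝ → ℝ}

theorem exists_finset_of_pair (hu : SolvesLinearODEOn Q a b u u')
    (hv : SolvesLinearODEOn Q a b v v') :
    ∃ S : Finset ℝ, ∀ x ∈ Ioo a b \ S,
      (HasDerivAt u (u' x) x ∧ HasDerivAt u' (Q x * u x) x) ∧
      (HasDerivAt v (v' x) x ∧ HasDerivAt v' (Q x * v x) x) := by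
  obtain ⟨Su, hSu⟩ := hu.hasDerivAt_off_finset
  obtain ⟨Sv, hSv⟩ := hv.hasDerivAt_off_finset
  refine ⟨Su ∪ Sv, fun x ⟨hx, hxS⟩ => ⟨hSu x ⟨hx, ?_⟩, hSv x ⟨hx, ?_⟩⟩⟩ <;>
    simp_all [Finset.coe_union]

theorem sub_const_mul (hu : SolvesLinearODEOn Q a b u u') (hv : SolvesLinearODEOn Q a b v v')
    (c : ℝ) :
    SolvesLinearODEOn Q a b (fun x => v x - c * u x) (fun x => v' x - c * u' x) := by
  obtain ⟨S, hS⟩ := hu.exists_finset_of_pair hv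
  refine ⟨hv.continuousOn.sub (hu.continuousOn.const_mul c),
    hv.continuousOn_deriv.sub (hu.continuousOn_deriv.const_mul c), S, fun x hx => ?_⟩
  obtain ⟨⟨hu₁, hu₂⟩, hv₁, hv₂⟩ := hS x hx
  exact ⟨hv₁.sub (hu₁.const_mul c), (hv₂.sub (hu₂.const_mul c)).congr_deriv (by ring)⟩

theorem wronskian_eq (hu : SolvesLinearODEOn Q a b u u') (hv : SolvesLinearODEOn Q a b v v')
    {x y : ℝ} (hx : x ∈ Icc a b) (hy : y ∈ Icc a b) :
    u x * v' x - u' x * v x = u y * v' y - u' y * v y := by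
  obtain ⟨S, hS⟩ := hu.exists_finset_of_pair hv
  refine eqOn_of_hasDerivAt_zero_off_finset (f := fun x => u x * v' x - u' x * v x) S
    ((hu.continuousOn.mul hv.continuousOn_deriv).sub
      (hu.continuousOn_deriv.mul hv.continuousOn)) (fun z hz => ?_) hx hy
  obtain ⟨⟨hu₁, hu₂⟩, hv₁, hv₂⟩ := hS z hz
  exact ((hu₁.mul hv₂).sub (hu₂.mul hv₁)).congr_deriv (by ring)

theorem eqOn_zero (hu : SolvesLinearODEOn Q a b u u') {M : ℝ}
    (hM : ∀ x ∈ Icc a b, |Q x| ≤ M) {x₀ : ℝ} (hx₀ : x₀ ∈ Icc a b)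
    (hu₀ : u x₀ = 0) (hu₀' : u' x₀ = 0) :
    EqOn u 0 (Icc a b) := by
  obtain ⟨S, hS⟩ := hu.hasDerivAt_off_finset
  -- the energy `u² + u'²` vanishes at `x₀` and grows at most exponentially
  have hbound : ∀ x ∈ Ioo a b \ S, |2 * u x * u' x + 2 * u' x * (Q x * u x)| ≤
      (1 + M) * (u x * u x + u' x * u' x) := by
    intro x hx
    have hQ := hM x (Ioo_subset_Icc_self hx.1)
    have hcross : |2 * u x * u' x| ≤ u x * u x + u' x * u' x := by
      rw [abs_le]; constructor <;> nlinarith [sq_nonneg (u x + u' x), sq_nonneg (u x - u' x)]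
    calc |2 * u x * u' x + 2 * u' x * (Q x * u x)|
        ≤ |2 * u x * u' x| + |Q x| * |2 * u x * u' x| := by
          rw [← abs_mul]; exact (abs_add_le _ _).trans_eq (by ring_nf)
      _ ≤ (1 + M) * (u x * u x + u' x * u' x) := by
          nlinarith [abs_nonneg (Q x), abs_nonneg (2 * u x * u' x)]
  have henergy := nonpos_of_abs_deriv_le_mul (r := fun x => u x * u x + u' x * u' x) S
    ((hu.continuousOn.mul hu.continuousOn).add
      (hu.continuousOn_deriv.mul hu.continuousOn_deriv))
    (fun x hx => (((hS x hx).1.mul (hS x hx).1).add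
      ((hS x hx).2.mul (hS x hx).2)).congr_deriv (by ring)) hbound hx₀ (by simp [hu₀, hu₀'])
  intro x hx
  show u x = 0
  nlinarith [henergy x hx, mul_self_nonneg (u x), mul_self_nonneg (u' x)]

theorem eqOn_const_mul (hu : SolvesLinearODEOn Q a b u u') (hv : SolvesLinearODEOn Q a b v v')
    {M : ℝ} (hM : ∀ x ∈ Icc a b, |Q x| ≤ M) {z : ℝ} (hz : z ∈ Icc a b) (huz : u z ≠ 0)
    (hW : u z * v' z - u' z * v z = 0) : EqOn v (fun x => v z / u z * u x) (Icc a b) := by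
  intro x hx
  have hdiff := (hu.sub_const_mul hv (v z / u z)).eqOn_zero hM hz (by field_simp; ring) (by
    field_simp; linear_combination hW) hx
  simp only [Pi.zero_apply, sub_eq_zero] at hdiff
  exact hdiff

end SolvesLinearODEOn

section Incidence

open Matrix

variable {V E : Type*} (s t : E → V)

def incidenceMatrix : Matrix V E ℝ :=
  fun v e => (if s e = v then 1 else 0) - (if t e = v then 1 else 0)

theorem incidenceMatrix_mulVec_apply [Fintype E] (w : E → ℝ) (v : V) :
    (incidenceMatrix s t *ᵥ w) v =
      ∑ e, ((if s e = v then w e else 0) - (if t e = v then w e else 0)) := by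
  simp only [mulVec, dotProduct, incidenceMatrix]
  exact Finset.sum_congr rfl fun e _ => by split_ifs <;> ring

theorem incidenceMatrix_transpose_mulVec_apply [Fintype V] (φ : V → ℝ) (e : E) :
    ((incidenceMatrix s t)ᵀ *ᵥ φ) e = φ (s e) - φ (t e) := by
  simp only [mulVec, dotProduct, transpose_apply, incidenceMatrix, sub_mul, ite_mul, one_mul,
    zero_mul, Finset.sum_sub_distrib, Finset.sum_ite_eq, Finset.mem_univ, if_true]

variable {s t} [Fintype V] [Nonempty V]
  (hconn : ∀ v w,
    Relation.EqvGen (fun v w => ∃ e, (s e = v ∧ t e = w) ∨ (s e = w ∧ t e = v)) v w)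
include hconn

theorem ker_incidenceMatrix_transpose :
    LinearMap.ker (incidenceMatrix s t)ᵀ.mulVecLin = ℝ ∙ (1 : V → ℝ) := by
  ext φ
  simp only [LinearMap.mem_ker, mulVecLin_apply, Submodule.mem_span_singleton]
  constructor
  · intro hφ
    have hedge (e : E) : φ (s e) = φ (t e) := by
      simpa [incidenceMatrix_transpose_mulVec_apply, sub_eq_zero] using congrFun hφ e
    have hconst (v w : V) : φ v = φ w :=
      (Equivalence.eqvGen_iff (r := fun v w => φ v = φ w) ⟨fun _ => rfl, Eq.symm, Eq.trans⟩).1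
        <| (hconn v w).mono fun v w ⟨e, he⟩ => by
          rcases he with ⟨rfl, rfl⟩ | ⟨rfl, rfl⟩
          exacts [hedge e, (hedge e).symm]
    exact ⟨φ (Classical.arbitrary V), funext fun v => by simp [hconst _ v]⟩
  · rintro ⟨c, rfl⟩
    funext e
    simp [incidenceMatrix_transpose_mulVec_apply]

theorem rank_incidenceMatrix [Fintype E] :
    (incidenceMatrix s t).rank = Fintype.card V - 1 := by
  have hker : Module.finrank ℝ (LinearMap.ker (incidenceMatrix s t)ᵀ.mulVecLin) = 1 := by
    rw [ker_incidenceMatrix_transpose hconn, finrank_span_singleton one_ne_zero]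
  have := LinearMap.finrank_range_add_finrank_ker (incidenceMatrix s t)ᵀ.mulVecLin
  rw [hker, Module.finrank_fintype_fun_eq_card] at this
  rw [← rank_transpose, rank]
  omega

theorem ker_incidenceMatrix_eq_bot [Fintype E] (hcard : Fintype.card V = Fintype.card E + 1) :
    LinearMap.ker (incidenceMatrix s t).mulVecLin = ⊥ := by
  have := LinearMap.finrank_range_add_finrank_ker (incidenceMatrix s t).mulVecLin
  rw [Module.finrank_fintype_fun_eq_card, ← rank, rank_incidenceMatrix hconn] at this
  exact Submodule.finrank_eq_zero.1 (by omega)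

end Incidence

namespace QuantumGraph

variable {Γ : QuantumGraph}

theorem Connected.eqvGen_adj (hconn : Γ.Connected) (v w : Γ.V) :
    Relation.EqvGen Γ.adj v w :=
  have : Subsingleton Γ.Components := (Nat.card_eq_one_iff_unique.1 hconn).1
  Quotient.exact (Subsingleton.elim (Γ.compOf v) (Γ.compOf w))

theorem Connected.nonempty_V (hconn : Γ.Connected) : Nonempty Γ.V := by
  obtain ⟨c⟩ := (Nat.card_eq_one_iff_unique.1 hconn).2
  induction c using Quotient.inductionOn with
  | h v => exact ⟨v⟩

theorem Connected.card_V_eq_card_E_add_one (hconn : Γ.Connected) (htree : Γ.betti = 0) :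
    Fintype.card Γ.V = Fintype.card Γ.E + 1 := by
  rw [betti, hconn, Nat.card_eq_fintype_card, Nat.card_eq_fintype_card] at htree
  omega

theorem exists_end_of_adj {v w : Γ.V} (h : Γ.adj v w) :
    ∃ a : Γ.E × Bool, Γ.endV a = v ∧ Γ.endV (a.1, !a.2) = w := by
  obtain ⟨e, ⟨hs, ht⟩ | ⟨hs, ht⟩⟩ := h
  exacts [⟨(e, false), hs, ht⟩, ⟨(e, true), ht, hs⟩]

theorem Connected.induction_on (hconn : Γ.Connected) {P : Γ.V → Prop}
    (hP : ∀ v w, Γ.adj v w → P v → P w) {v w : Γ.V} (hv : P v) : P w := by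
  have hequiv : Equivalence fun v w => P v ↔ P w := ⟨fun _ => Iff.rfl, Iff.symm, Iff.trans⟩
  refine ((hequiv.eqvGen_iff).1 ((hconn.eqvGen_adj v w).mono fun v w h => ?_)).1 hv
  obtain ⟨e, he⟩ := h
  exact ⟨hP v w ⟨e, he⟩, hP w v ⟨e, he.symm⟩⟩

theorem two_le_degree_of_ne {a b : Γ.E × Bool} (hne : a ≠ b) (h : Γ.endV a = Γ.endV b) :
    2 ≤ Γ.degree (Γ.endV a) := by
  rw [degree, ← Finset.card_filter, ← Finset.card_pair hne]
  exact Finset.card_le_card fun x hx => by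
    rcases Finset.mem_insert.1 hx with rfl | hx
    · simp
    · simp [Finset.mem_singleton.1 hx, h]

theorem eq_of_endV_eq {a b : Γ.E × Bool} (hdeg : Γ.degree (Γ.endV a) < 2)
    (h : Γ.endV a = Γ.endV b) : a = b := by
  by_contra hne
  exact (two_le_degree_of_ne hne h).not_gt hdeg

theorem eq_of_degree_lt_two (hconn : Γ.Connected) {e : Γ.E} (hs : Γ.degree (Γ.s e) < 2)
    (ht : Γ.degree (Γ.t e) < 2) (e' : Γ.E) : e' = e := by
  have hdeg (b : Bool) : Γ.degree (Γ.endV (e, b)) < 2 := by cases b <;> assumption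
  obtain ⟨b, hb⟩ : ∃ b, Γ.endV (e, b) = Γ.s e' := by
    refine hconn.induction_on (P := fun v => ∃ b, Γ.endV (e, b) = v) ?_ ⟨false, rfl⟩
    rintro v w hvw ⟨b, rfl⟩
    obtain ⟨a, hav, rfl⟩ := exists_end_of_adj hvw
    obtain rfl := (eq_of_endV_eq (hdeg b) hav.symm).symm
    exact ⟨!b, rfl⟩
  exact (congrArg Prod.fst (eq_of_endV_eq (b := (e', false)) (hdeg b) hb)).symm

theorem eq_of_forall_endV_eq {α : Type*} (hconn : Γ.Connected) {c : Γ.E → α}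
    (hc : ∀ a b, Γ.endV a = Γ.endV b → c a.1 = c b.1) (e e' : Γ.E) : c e' = c e := by
  refine hconn.induction_on (P := fun v => ∀ a, Γ.endV a = v → c a.1 = c e) ?_
    (fun a ha => hc a (e, false) ha) (e', false) rfl
  rintro v w hvw hv b rfl
  obtain ⟨a, rfl, haw⟩ := exists_end_of_adj hvw
  exact (hc b (a.1, !a.2) haw.symm).trans (hv a rfl)

section Eigenfunctions

variable {lam : ℝ} {f f' g g' : Γ.E → ℝ → ℝ}

theorem exists_abs_q_sub_le (e : Γ.E) (lam : ℝ) :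
    ∃ M, ∀ x ∈ Icc 0 (Γ.L e), |Γ.q e x - lam| ≤ M := by
  obtain ⟨M, hM⟩ := Γ.q_bdd e
  exact ⟨M + |lam|, fun x hx => by linarith [abs_sub (Γ.q e x) lam, hM x hx]⟩

theorem endVal_eq_mul {a : Γ.E × Bool} {c : ℝ}
    (h : ∀ x ∈ Icc 0 (Γ.L a.1), g a.1 x = c * f a.1 x) :
    Γ.endVal g a = c * Γ.endVal f a := by
  obtain ⟨e, _ | _⟩ := a
  exacts [h 0 ⟨le_rfl, (Γ.L_pos e).le⟩, h (Γ.L e) ⟨(Γ.L_pos e).le, le_rfl⟩]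

def endWronskian (f f' g g' : Γ.E → ℝ → ℝ) (a : Γ.E × Bool) : ℝ :=
  Γ.endVal f a * Γ.endDeriv g' a - Γ.endDeriv f' a * Γ.endVal g a

theorem sum_endWronskian_eq_incidenceMatrix_mulVec
    (hW : ∀ e, f e (Γ.L e) * g' e (Γ.L e) - f' e (Γ.L e) * g e (Γ.L e) =
      f e 0 * g' e 0 - f' e 0 * g e 0) (v : Γ.V) :
    ∑ a, (if Γ.endV a = v then Γ.endWronskian f f' g g' a else 0) =
      (incidenceMatrix Γ.s Γ.t).mulVec (fun e => f e 0 * g' e 0 - f' e 0 * g e 0) v := by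
  rw [incidenceMatrix_mulVec_apply, Fintype.sum_prod_type]
  refine Finset.sum_congr rfl fun e _ => ?_
  simp only [Fintype.sum_bool, endWronskian, endV, endVal, endDeriv, if_true,
    Bool.false_eq_true, if_false]
  split_ifs <;> linarith [hW e]

theorem eigMult_eq_one (hf : Γ.IsEigenfun lam f)
    (h : ∀ g, Γ.IsEigenfun lam g → ∃ c : ℝ, g = c • f) : Γ.eigMult lam = 1 := by
  obtain ⟨f', hfp⟩ := hf
  obtain ⟨e, x, -, hx⟩ := hfp.nontrivial
  have hspan : Submodule.span ℝ {g | Γ.IsEigenfun lam g} = ℝ ∙ f := by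
    refine le_antisymm (Submodule.span_le.2 fun g hg => ?_)
      (Submodule.span_mono (singleton_subset_iff.2 ⟨f', hfp⟩))
    obtain ⟨c, rfl⟩ := h g hg
    exact Submodule.smul_mem _ c (Submodule.mem_span_singleton_self f)
  change Module.finrank ℝ _ = 1
  rw [hspan, finrank_span_singleton]
  rintro rfl
  exact hx rfl

namespace IsEigenfunPair

theorem solvesLinearODEOn (hf : Γ.IsEigenfunPair lam f f') (e : Γ.E) :
    SolvesLinearODEOn (fun x => Γ.q e x - lam) 0 (Γ.L e) (f e) (f' e) := by
  obtain ⟨S, hS⟩ := hf.ode e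
  refine ⟨fun x hx => (hf.hasDeriv e x hx).continuousWithinAt, hf.contDeriv e, S,
    fun x ⟨hx, hxS⟩ => ?_⟩
  have hnhds : Icc 0 (Γ.L e) ∈ nhds x := Icc_mem_nhds hx.1 hx.2
  exact ⟨(hf.hasDeriv e x (Ioo_subset_Icc_self hx)).hasDerivAt hnhds,
    (hS x ⟨Ioo_subset_Icc_self hx, hxS⟩).hasDerivAt hnhds⟩

theorem sum_endWronskian_eq_zero {mu : ℝ} (hf : Γ.IsEigenfunPair lam f f')
    (hg : Γ.IsEigenfunPair mu g g') (v : Γ.V) :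
    ∑ a, (if Γ.endV a = v then Γ.endWronskian f f' g g' a else 0) = 0 := by
  cases hα : Γ.α v with
  | none =>
    refine Finset.sum_eq_zero fun a _ => ?_
    split_ifs with ha
    · simp [endWronskian, hf.dirich v a hα ha, hg.dirich v a hα ha]
    · rfl
  | some c =>
    by_cases hv : ∃ a₀, Γ.endV a₀ = v
    · obtain ⟨a₀, ha₀⟩ := hv
      have hsum : ∑ a, (if Γ.endV a = v then Γ.endWronskian f f' g g' a else 0) =
          Γ.endVal f a₀ * Γ.derivSumAt g' v - Γ.endVal g a₀ * Γ.derivSumAt f' v := by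
        simp only [derivSumAt, Finset.mul_sum, ← Finset.sum_sub_distrib]
        refine Finset.sum_congr rfl fun a _ => ?_
        split_ifs with ha
        · rw [endWronskian, hf.contVert a a₀ (ha.trans ha₀.symm),
            hg.contVert a a₀ (ha.trans ha₀.symm)]
          ring
        · ring
      rw [hsum, hf.delta v c a₀ hα ha₀, hg.delta v c a₀ hα ha₀]
      ring
    · exact Finset.sum_eq_zero fun a _ => if_neg fun ha => hv ⟨a, ha⟩

/-- The edge values of the Wronskian form a divergence-free flow, and a tree carries none. -/
theorem wronskian_eq_zero (hconn : Γ.Connected) (htree : Γ.betti = 0)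
    (hf : Γ.IsEigenfunPair lam f f') (hg : Γ.IsEigenfunPair lam g g') (e : Γ.E) :
    ∀ x ∈ Icc 0 (Γ.L e), f e x * g' e x - f' e x * g e x = 0 := by
  have hconst (e : Γ.E) {x : ℝ} (hx : x ∈ Icc 0 (Γ.L e)) :
      f e x * g' e x - f' e x * g e x = f e 0 * g' e 0 - f' e 0 * g e 0 :=
    (hf.solvesLinearODEOn e).wronskian_eq (hg.solvesLinearODEOn e) hx
      ⟨le_rfl, (Γ.L_pos e).le⟩
  have hflow : (fun e => f e 0 * g' e 0 - f' e 0 * g e 0) ∈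
      LinearMap.ker (incidenceMatrix Γ.s Γ.t).mulVecLin := by
    refine funext fun v => ?_
    rw [Matrix.mulVecLin_apply, ← sum_endWronskian_eq_incidenceMatrix_mulVec
      (fun e => hconst e ⟨(Γ.L_pos e).le, le_rfl⟩)]
    exact hf.sum_endWronskian_eq_zero hg v
  have : Nonempty Γ.V := hconn.nonempty_V
  rw [ker_incidenceMatrix_eq_bot hconn.eqvGen_adj
    (hconn.card_V_eq_card_E_add_one htree)] at hflow
  intro x hx
  rw [hconst e hx]
  exact congrFun hflow e

theorem exists_ne_zero (hconn : Γ.Connected) (hf : Γ.IsEigenfunPair lam f f')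
    (hnz : ∀ a : Γ.E × Bool, 2 ≤ Γ.degree (Γ.endV a) → Γ.endVal f a ≠ 0) (e : Γ.E) :
    ∃ z ∈ Icc 0 (Γ.L e), f e z ≠ 0 := by
  by_contra! hzero
  have hs : Γ.degree (Γ.s e) < 2 := lt_of_not_ge fun h =>
    hnz (e, false) h (hzero 0 ⟨le_rfl, (Γ.L_pos e).le⟩)
  have ht : Γ.degree (Γ.t e) < 2 := lt_of_not_ge fun h =>
    hnz (e, true) h (hzero (Γ.L e) ⟨(Γ.L_pos e).le, le_rfl⟩)
  obtain ⟨e₀, x, hx, hfx⟩ := hf.nontrivial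
  obtain rfl := eq_of_degree_lt_two hconn hs ht e₀
  exact hfx (hzero x hx)

theorem exists_eq_smul (hconn : Γ.Connected) (htree : Γ.betti = 0)
    (hf : Γ.IsEigenfunPair lam f f')
    (hnz : ∀ a : Γ.E × Bool, 2 ≤ Γ.degree (Γ.endV a) → Γ.endVal f a ≠ 0)
    (hg : Γ.IsEigenfunPair lam g g') : ∃ c : ℝ, g = c • f := by
  choose z hz hfz using hf.exists_ne_zero hconn hnz
  set c : Γ.E → ℝ := fun e => g e (z e) / f e (z e)
  have hedge (e : Γ.E) : ∀ x ∈ Icc 0 (Γ.L e), g e x = c e * f e x := by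
    obtain ⟨M, hM⟩ := Γ.exists_abs_q_sub_le e lam
    exact (hf.solvesLinearODEOn e).eqOn_const_mul (hg.solvesLinearODEOn e) hM (hz e) (hfz e)
      (hf.wronskian_eq_zero hconn htree hg e _ (hz e))
  have hvertex (a b : Γ.E × Bool) (hab : Γ.endV a = Γ.endV b) : c a.1 = c b.1 := by
    rcases eq_or_ne a b with rfl | hne
    · rfl
    refine mul_right_cancel₀ (hnz a (two_le_degree_of_ne hne hab)) ?_
    rw [← endVal_eq_mul (hedge a.1), hg.contVert a b hab, endVal_eq_mul (hedge b.1),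
      hf.contVert a b hab]
  obtain ⟨e₀, -⟩ := hf.nontrivial
  refine ⟨c e₀, funext fun e => funext fun x => ?_⟩
  by_cases hx : x ∈ Icc 0 (Γ.L e)
  · rw [hedge e x hx, eq_of_forall_endV_eq hconn hvertex e₀ e]
    rfl
  · simp [hf.support e x hx, hg.support e x hx]

end IsEigenfunPair

end Eigenfunctions

end QuantumGraph

theorem tree_nonvanishing_implies_simple_general (T : QuantumGraph) (hconn : T.Connected)
    (htree : T.betti = 0)
    (lam : ℝ) (f : T.E → ℝ → ℝ) (hf : T.IsEigenfun lam f)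
    (hnz : ∀ a : T.E × Bool, 2 ≤ T.degree (T.endV a) → T.endVal f a ≠ 0) :
    T.eigMult lam = 1 := by
  obtain ⟨f', hfp⟩ := hf
  exact eigMult_eq_one ⟨f', hfp⟩ fun g ⟨g', hg⟩ => hfp.exists_eq_smul hconn htree hnz hg

/-- Proposition 1 of the paper.  Let `T` be a quantum tree graph
(finite, connected, first Betti number `0`) with δ-type conditions at its vertices, with
Dirichlet conditions not allowed at internal vertices (vertices of degree at least 2).
If an eigenvalue `lam` of `T` has an eigenfunction that is nonzero at all internal
vertices of `T`, then `lam` is a simple eigenvalue. -/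
theorem tree_nonvanishing_implies_simple (T : QuantumGraph) (hconn : T.Connected)
    (htree : T.betti = 0)
    (hdir : ∀ v : T.V, 2 ≤ T.degree v → T.α v ≠ none)
    (lam : ℝ) (f : T.E → ℝ → ℝ) (hf : T.IsEigenfun lam f)
    (hnz : ∀ a : T.E × Bool, 2 ≤ T.degree (T.endV a) → T.endVal f a ≠ 0) :
    T.eigMult lam = 1 :=
  tree_nonvanishing_implies_simple_general T hconn htree lam f hf hnz
end
end
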